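/- The wreath product Z wr Z (integers wreath integers) is not self-similar: for every subgroup H ≤ Z wr Z of finite index and every homomorphism f : H → Z wr Z, there exists a nontrivial subgroup K ≤ H that is normal in Z wr Z and satisfies f(K) ≤ K. -/

import Mathlib

def shiftEquiv {B X : Type*} [AddCommGroup B] [AddCommGroup X] (x : X) :
    (X →₀ B) ≃+ (X →₀ B) := Finsupp.domCongr (Equiv.addRight x)

noncomputable def shiftHom (B X : Type*) [AddCommGroup B] [AddCommGroup X] :
    Multiplicative X →* Multiplicative (AddAut (X →₀ B)) :=
  MonoidHom.mk' (fun x => Multiplicative.ofAdd (shiftEquiv x.toAdd)) (by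
    intro a b
    show shiftEquiv _ = shiftEquiv _ + shiftEquiv _
    apply AddEquiv.ext
    intro f
    ext y
    simp [shiftEquiv, Finsupp.domCongr, Equiv.Perm.mul_def, AddAut.add_apply, sub_eq_add_neg]
    congr 1
    abel)

noncomputable def wreathAct (B X : Type*) [AddCommGroup B] [AddCommGroup X] :
    Multiplicative X →* MulAut (Multiplicative (X →₀ B)) :=
  { toFun := fun x => AddEquiv.toMultiplicative (shiftHom B X x).toAdd
    map_one' := by ext f; simp
    map_mul' := by intro a b; ext f; simp }

abbrev Wreath (B X : Type*) [AddCommGroup B] [AddCommGroup X] :=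
  SemidirectProduct (Multiplicative (X →₀ B)) (Multiplicative X) (wreathAct B X)

/-!
Let `h₀ ∈ H` have nonzero degree `m` and let `d` be the index of the normal core of `H`, so that
`g ^ d ∈ H` for every `g`. Elements of the base group commute, and a base element commuting with
an element of nonzero degree is trivial, because a nonzero finitely supported function is never
invariant under a nonzero shift.

If `f` kills every commutator `⁅h₀, x⁆` with `x ∈ H ∩ base`, then the shift-invariant group
`{shift_m (d • a) - d • a}` of such commutators is the required `K`. This happens when `f h₀` and
`f (H ∩ base)` lie in the base, and also when `f b` has nonzero degree for some base element
`b ∈ H`, since `f ⁅h₀, x⁆` is a base element commuting with `f b`.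

Otherwise `f` maps `H ∩ base` to the base and `f h₀` has nonzero degree `s`, and `K = d • base`
works: `f` intertwines the shift by `m` with the shift by `s`, and pigeonhole in `G ⧸ H` shows
that `f (d • a)` is, modulo `d`, invariant under a nonzero shift, hence divisible by `d`.
-/

open SemidirectProduct Multiplicative commutatorElement

theorem Subgroup.exists_ne_inv_mul_mem {G α : Type*} [Group G] [Infinite α] (H : Subgroup G)
    [H.FiniteIndex] (y : α → G) : ∃ i j, i ≠ j ∧ (y i)⁻¹ * y j ∈ H := by
  obtain ⟨i, j, hij, h⟩ := Finite.exists_ne_map_eq_of_infinite (fun a => (y a : G ⧸ H))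
  exact ⟨i, j, hij, QuotientGroup.eq.mp h⟩

theorem exists_eq_nsmul_of_forall_dvd {X : Type*} {q : X →₀ ℤ} {d : ℕ}
    (h : ∀ k, (d : ℤ) ∣ q k) : ∃ w, q = d • w :=
  ⟨q.mapRange (· / (d : ℤ)) (Int.zero_ediv _), by
    ext k
    simp [Int.mul_ediv_cancel' (h k)]⟩

section Shift

variable {B X : Type*} [AddCommGroup B] [AddCommGroup X]

theorem shiftEquiv_apply (t : X) (v : X →₀ B) (y : X) : shiftEquiv t v y = v (y - t) := by
  simp [shiftEquiv, sub_eq_add_neg]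

theorem shiftEquiv_shiftEquiv (s t : X) (v : X →₀ B) :
    shiftEquiv s (shiftEquiv t v) = shiftEquiv (s + t) v := by
  ext y
  simp only [shiftEquiv_apply, sub_sub]

theorem shiftEquiv_zero (v : X →₀ B) : shiftEquiv 0 v = v := by
  ext y
  simp [shiftEquiv_apply]

theorem mapRange_shiftEquiv {C : Type*} [AddCommGroup C] {f : B → C} (hf : f 0 = 0) (t : X)
    (v : X →₀ B) :
    Finsupp.mapRange f hf (shiftEquiv t v) = shiftEquiv t (Finsupp.mapRange f hf v) := by
  ext y
  simp [shiftEquiv_apply]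

theorem eq_zero_of_shiftEquiv_eq_self [LinearOrder X] [IsOrderedAddMonoid X] {t : X} (ht : t ≠ 0)
    {v : X →₀ B} (h : shiftEquiv t v = v) : v = 0 := by
  by_contra hv
  have hs : v.support.Nonempty := Finsupp.support_nonempty_iff.mpr hv
  set M := v.support.max' hs
  have hM : v M ≠ 0 := Finsupp.mem_support_iff.mp (v.support.max'_mem hs)
  -- `M + t` and `M - t` both lie in the support, and one of them exceeds its maximum `M`
  have hplus : M + t ≤ M := by
    refine v.support.le_max' _ (Finsupp.mem_support_iff.mpr ?_)
    rwa [← h, shiftEquiv_apply, add_sub_cancel_right]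
  have hminus : M - t ≤ M := by
    refine v.support.le_max' _ (Finsupp.mem_support_iff.mpr ?_)
    rwa [← shiftEquiv_apply, h]
  exact ht (le_antisymm (by simpa using hplus) (by simpa using hminus))

/-- Reduced modulo `d`, the hypothesis says that `q` is invariant under the nonzero shift by
`s - t`, so `q ≡ 0 mod d`. -/
theorem exists_eq_nsmul_of_nsmul_eq_shiftEquiv_sub [LinearOrder X] [IsOrderedAddMonoid X]
    {d : ℕ} {s t : X} (hst : s ≠ t) {q e : X →₀ ℤ}
    (h : d • e = shiftEquiv s q - shiftEquiv t q) : ∃ w, q = d • w := by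
  set ρ := Finsupp.mapRange.addMonoidHom (Int.castAddHom (ZMod d)) with hρ
  have hρ_nsmul : ρ (d • e) = 0 := by
    ext k
    simp [hρ]
  have hρq : shiftEquiv s (ρ q) = shiftEquiv t (ρ q) := by
    have := congrArg ρ h
    rw [hρ_nsmul, map_sub, eq_comm, sub_eq_zero] at this
    simpa [hρ, mapRange_shiftEquiv] using this
  have hfix : shiftEquiv (s - t) (ρ q) = ρ q := by
    have := congrArg (shiftEquiv (-t)) hρq
    rwa [shiftEquiv_shiftEquiv, shiftEquiv_shiftEquiv, neg_add_cancel, neg_add_eq_sub,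
      shiftEquiv_zero] at this
  have hzero := eq_zero_of_shiftEquiv_eq_self (sub_ne_zero.mpr hst) hfix
  refine exists_eq_nsmul_of_forall_dvd fun k => ?_
  rw [← ZMod.intCast_zmod_eq_zero_iff_dvd]
  simpa [hρ] using congrArg (· k) hzero

end Shift

namespace SemidirectProduct

theorem right_commutatorElement {N G : Type*} [Group N] [CommGroup G] {φ : G →* MulAut N}
    (g x : N ⋊[φ] G) : ⁅g, x⁆.right = 1 := by
  rw [← rightHom_eq_right, map_commutatorElement, commutatorElement_eq_one_iff_commute]
  exact Commute.all _ _

variable {N G : Type*} [Group G]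

theorem exists_mem_right_ne_one [Group N] {φ : G →* MulAut N} [Infinite G]
    (H : Subgroup (N ⋊[φ] G)) [H.FiniteIndex] : ∃ h ∈ H, h.right ≠ 1 := by
  obtain ⟨i, j, hij, h⟩ := H.exists_ne_inv_mul_mem (inr : G → N ⋊[φ] G)
  refine ⟨_, h, fun h1 => hij ?_⟩
  simpa [inv_mul_eq_one] using h1

variable [CommGroup N] {φ : G →* MulAut N}

theorem mul_inl_mul_inv (g : N ⋊[φ] G) (n : N) : g * inl n * g⁻¹ = inl (φ g.right n) := by
  ext
  · simp [MulAut.inv_def]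
  · simp

theorem inl_left_of_right_eq_one {g : N ⋊[φ] G} (h : g.right = 1) : inl g.left = g := by
  ext <;> simp [h]

theorem commute_of_right_eq_one {x y : N ⋊[φ] G} (hx : x.right = 1) (hy : y.right = 1) :
    Commute x y := by
  rw [← inl_left_of_right_eq_one hx, ← inl_left_of_right_eq_one hy]
  exact (Commute.all _ _).map inl

end SemidirectProduct

def HasNontrivialInvariantNormal {G : Type*} [Group G] (H : Subgroup G) (f : H →* G) : Prop :=
  ∃ K : Subgroup G, K ≠ ⊥ ∧ K.Normal ∧ ∃ hK : K ≤ H, ∀ k (hk : k ∈ K), f ⟨k, hK hk⟩ ∈ K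

namespace Wreath

section General

variable {B X : Type*} [AddCommGroup B] [AddCommGroup X]

theorem mul_inl_mul_inv (g : Wreath B X) (u : Multiplicative (X →₀ B)) :
    g * inl u * g⁻¹ = inl (ofAdd (shiftEquiv (toAdd g.right) (toAdd u))) :=
  SemidirectProduct.mul_inl_mul_inv g u

theorem zpow_mul_inl_mul_inv (g : Wreath B X) (n : ℤ) (u : Multiplicative (X →₀ B)) :
    g ^ n * inl u * (g ^ n)⁻¹ = inl (ofAdd (shiftEquiv (n • toAdd g.right) (toAdd u))) := by
  rw [mul_inl_mul_inv, ← rightHom_eq_right, map_zpow, toAdd_zpow, rightHom_eq_right]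

theorem commutatorElement_inl (g : Wreath B X) (u : Multiplicative (X →₀ B)) :
    ⁅g, (inl u : Wreath B X)⁆ = inl (ofAdd (shiftEquiv (toAdd g.right) (toAdd u) - toAdd u)) := by
  rw [commutatorElement_def, mul_inl_mul_inv, ← map_inv, ← map_mul, ofAdd_sub, ofAdd_toAdd,
    div_eq_mul_inv]

theorem inl_ofAdd_nsmul (v : X →₀ B) (d : ℕ) :
    (inl (ofAdd (d • v)) : Wreath B X) = inl (ofAdd v) ^ d := by
  rw [ofAdd_nsmul, map_pow]

theorem eq_one_of_commute [LinearOrder X] [IsOrderedAddMonoid X] {y z : Wreath B X}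
    (hy : y.right = 1) (hz : z.right ≠ 1) (h : Commute y z) : y = 1 := by
  have hconj : z * inl y.left * z⁻¹ = inl y.left := by
    rw [inl_left_of_right_eq_one hy, h.symm.eq, mul_inv_cancel_right]
  rw [mul_inl_mul_inv, inl_inj] at hconj
  have hleft := eq_zero_of_shiftEquiv_eq_self (toAdd_eq_zero.not.mpr hz) (congrArg toAdd hconj)
  rw [← inl_left_of_right_eq_one hy, toAdd_eq_zero.mp hleft, map_one]

theorem hasNontrivialInvariantNormal_of_addSubgroup {H : Subgroup (Wreath B X)}
    {f : H →* Wreath B X} (W : AddSubgroup (X →₀ B)) (hne : W ≠ ⊥)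
    (hshift : ∀ t, ∀ w ∈ W, shiftEquiv t w ∈ W) (hWH : ∀ w ∈ W, inl (ofAdd w) ∈ H)
    (hf : ∀ w (hw : w ∈ W), ∃ w' ∈ W, f ⟨inl (ofAdd w), hWH w hw⟩ = inl (ofAdd w')) :
    HasNontrivialInvariantNormal H f := by
  have hKH : W.toSubgroup.map inl ≤ H := by
    rintro _ ⟨u, hu, rfl⟩
    exact hWH _ hu
  refine ⟨W.toSubgroup.map inl, ?_, ⟨?_⟩, hKH, ?_⟩
  · rwa [Ne, Subgroup.map_eq_bot_iff_of_injective _ inl_injective,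
      ← AddSubgroup.toSubgroup.map_bot, AddSubgroup.toSubgroup.apply_eq_iff_eq]
  · rintro _ ⟨u, hu, rfl⟩ g
    rw [mul_inl_mul_inv]
    exact ⟨_, hshift _ _ hu, rfl⟩
  · rintro _ ⟨u, hu, rfl⟩
    obtain ⟨w', hw', hfw⟩ := hf _ hu
    exact ⟨ofAdd w', hw', hfw.symm⟩

end General

theorem hasNontrivialInvariantNormal_of_map_commutatorElement_eq_one
    {H : Subgroup (Wreath ℤ ℤ)} {f : H →* Wreath ℤ ℤ} {d : ℕ} (hd : d ≠ 0)
    (hdH : ∀ g, g ^ d ∈ H) (h₀ : H) (hh₀ : (h₀ : Wreath ℤ ℤ).right ≠ 1)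
    (hf : ∀ x : H, (x : Wreath ℤ ℤ).right = 1 → f ⁅h₀, x⁆ = 1) :
    HasNontrivialInvariantNormal H f := by
  set m := toAdd (h₀ : Wreath ℤ ℤ).right
  have hm : m ≠ 0 := toAdd_eq_zero.not.mpr hh₀
  set θ : (ℤ →₀ ℤ) →+ (ℤ →₀ ℤ) :=
    ((shiftEquiv m : (ℤ →₀ ℤ) ≃+ _).toAddMonoidHom - .id _).comp (d • .id _)
  have hθ_apply (a : ℤ →₀ ℤ) : θ a = shiftEquiv m (d • a) - d • a := rfl
  let x (a : ℤ →₀ ℤ) : H := ⟨inl (ofAdd (d • a)), inl_ofAdd_nsmul a d ▸ hdH _⟩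
  have hx (a : ℤ →₀ ℤ) : inl (ofAdd (θ a)) = ((⁅h₀, x a⁆ : H) : Wreath ℤ ℤ) :=
    (commutatorElement_inl _ _).symm
  refine hasNontrivialInvariantNormal_of_addSubgroup θ.range ?_ ?_
    (fun _ ⟨a, ha⟩ => ha ▸ (hx a).symm ▸ (⁅h₀, x a⁆ : H).2) ?_
  · rw [Ne, AddMonoidHom.range_eq_bot_iff]
    intro h
    have := congrArg (fun φ => φ (Finsupp.single 0 1) 0) h
    simp [hθ_apply, shiftEquiv_apply, hm] at this
    exact hd this
  · rintro t _ ⟨a, rfl⟩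
    refine ⟨shiftEquiv t a, ?_⟩
    simp only [hθ_apply, map_sub, map_nsmul, shiftEquiv_shiftEquiv, add_comm]
  · rintro _ ⟨a, rfl⟩
    refine ⟨0, zero_mem _, ?_⟩
    rw [ofAdd_zero, map_one, ← hf (x a) (right_inl _)]
    exact congrArg f (Subtype.ext (hx a))

theorem map_commutatorElement_eq_one {H : Subgroup (Wreath ℤ ℤ)} {f : H →* Wreath ℤ ℤ}
    {b₀ : H} (hb₀ : (b₀ : Wreath ℤ ℤ).right = 1) (hfb₀ : (f b₀).right ≠ 1) (g x : H) :
    f ⁅g, x⁆ = 1 := by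
  have hcomm : Commute ⁅g, x⁆ b₀ :=
    Subtype.ext (commute_of_right_eq_one (right_commutatorElement (g : Wreath ℤ ℤ) x) hb₀).eq
  refine eq_one_of_commute ?_ hfb₀ (hcomm.map f)
  rw [map_commutatorElement]
  exact right_commutatorElement _ _

/-- Pigeonhole in `G ⧸ H` gives `i ≠ j` with `b = (gⁱ a g⁻ⁱ)⁻¹ (gʲ a g⁻ʲ) ∈ H`, and `f (b ^ d)`
is both `d • f b` and the difference of two shifts of `f (d • a)`. -/
theorem exists_map_inl_nsmul_eq {H : Subgroup (Wreath ℤ ℤ)} [H.FiniteIndex]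
    {f : H →* Wreath ℤ ℤ} {d : ℕ} (hdH : ∀ g, g ^ d ∈ H)
    (hA : ∀ x : H, (x : Wreath ℤ ℤ).right = 1 → (f x).right = 1)
    (g : H) (hg : (f g).right ≠ 1) (a : ℤ →₀ ℤ) :
    ∃ w, f ⟨inl (ofAdd (d • a)), inl_ofAdd_nsmul a d ▸ hdH _⟩ = inl (ofAdd (d • w)) := by
  set x : H := ⟨inl (ofAdd (d • a)), inl_ofAdd_nsmul a d ▸ hdH _⟩
  let y (n : ℤ) : Wreath ℤ ℤ := (g : Wreath ℤ ℤ) ^ n * inl (ofAdd a) * ((g : Wreath ℤ ℤ) ^ n)⁻¹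
  have hy_right (n : ℤ) : (y n).right = 1 := by
    simp only [y, zpow_mul_inl_mul_inv, right_inl]
  obtain ⟨i, j, hij, hb⟩ := H.exists_ne_inv_mul_mem y
  set b : H := ⟨_, hb⟩
  have hbd : b ^ d = (g ^ i * x * (g ^ i)⁻¹)⁻¹ * (g ^ j * x * (g ^ j)⁻¹) := by
    have hcomm : Commute (y i)⁻¹ (y j) :=
      (commute_of_right_eq_one (hy_right i) (hy_right j)).inv_left
    apply Subtype.ext
    push_cast
    rw [hcomm.mul_pow, inv_pow, conj_pow, conj_pow, ← inl_ofAdd_nsmul]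
  obtain ⟨q, hq⟩ : ∃ q, f x = inl (ofAdd q) := ⟨_, (inl_left_of_right_eq_one (hA x rfl)).symm⟩
  obtain ⟨e, he⟩ : ∃ e, f b = inl (ofAdd e) :=
    ⟨_, (inl_left_of_right_eq_one (hA b (by simp [b, hy_right]))).symm⟩
  set s := toAdd (f g).right
  have hfconj (n : ℤ) : f (g ^ n * x * (g ^ n)⁻¹) = inl (ofAdd (shiftEquiv (n • s) q)) := by
    rw [map_mul, map_mul, map_inv, map_zpow, hq, zpow_mul_inl_mul_inv]
    rfl
  have key : d • e = shiftEquiv (j • s) q - shiftEquiv (i • s) q := by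
    have := congrArg f hbd
    rw [map_pow, map_mul, map_inv, hfconj, hfconj, he, ← inl_ofAdd_nsmul, ← map_inv,
      ← map_mul, inl_inj] at this
    exact congrArg toAdd this |>.trans (by simp [sub_eq_neg_add])
  have hs : s ≠ 0 := toAdd_eq_zero.not.mpr hg
  obtain ⟨w, rfl⟩ := exists_eq_nsmul_of_nsmul_eq_shiftEquiv_sub
    (fun h => hij (smul_left_injective ℤ hs h).symm) key
  exact ⟨w, hq⟩

theorem hasNontrivialInvariantNormal_of_map_right_eq_one {H : Subgroup (Wreath ℤ ℤ)}
    [H.FiniteIndex] {f : H →* Wreath ℤ ℤ} {d : ℕ} (hd : d ≠ 0) (hdH : ∀ g, g ^ d ∈ H)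
    (hA : ∀ x : H, (x : Wreath ℤ ℤ).right = 1 → (f x).right = 1)
    (g : H) (hg : (f g).right ≠ 1) : HasNontrivialInvariantNormal H f := by
  refine hasNontrivialInvariantNormal_of_addSubgroup (d • AddMonoidHom.id (ℤ →₀ ℤ)).range ?_ ?_
    (fun _ ⟨a, ha⟩ => ha ▸ inl_ofAdd_nsmul a d ▸ hdH _) ?_
  · rw [Ne, AddMonoidHom.range_eq_bot_iff]
    intro h
    have := congrArg (fun φ => φ (Finsupp.single 0 1) 0) h
    simp at this
    exact hd this
  · rintro t _ ⟨a, rfl⟩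
    exact ⟨shiftEquiv t a, by simp⟩
  · rintro _ ⟨a, rfl⟩
    obtain ⟨w, hw⟩ := exists_map_inl_nsmul_eq hdH hA g hg a
    exact ⟨_, ⟨w, rfl⟩, hw⟩

end Wreath

open Wreath

/-- `ℤ wr ℤ` is not self-similar: for every finite-index subgroup `H` and
homomorphism `f : H → ℤ wr ℤ`, some nontrivial subgroup `K ≤ H` normal in `ℤ wr ℤ` is
`f`-invariant. -/
theorem stmt11 (H : Subgroup (Wreath ℤ ℤ)) (hH : H.FiniteIndex) (f : H →* Wreath ℤ ℤ) :
    ∃ K : Subgroup (Wreath ℤ ℤ), K ≠ ⊥ ∧ K.Normal ∧ ∃ hK : K ≤ H,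
      ∀ k (hk : k ∈ K), f ⟨k, hK hk⟩ ∈ K := by
  obtain ⟨h₀, hh₀H, hh₀⟩ := exists_mem_right_ne_one H
  have hd : H.normalCore.index ≠ 0 := Subgroup.FiniteIndex.index_ne_zero
  have hdH (g : Wreath ℤ ℤ) : g ^ H.normalCore.index ∈ H :=
    H.normalCore_le (H.normalCore.pow_index_mem g)
  by_cases hA : ∀ x : H, (x : Wreath ℤ ℤ).right = 1 → (f x).right = 1
  · by_cases hs : (f ⟨h₀, hh₀H⟩).right = 1
    · refine hasNontrivialInvariantNormal_of_map_commutatorElement_eq_one hd hdH ⟨h₀, hh₀H⟩ hh₀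
        fun x hx => ?_
      rw [map_commutatorElement, commutatorElement_eq_one_iff_commute]
      exact commute_of_right_eq_one hs (hA x hx)
    · exact hasNontrivialInvariantNormal_of_map_right_eq_one hd hdH hA _ hs
  · push Not at hA
    obtain ⟨b₀, hb₀, hfb₀⟩ := hA
    exact hasNontrivialInvariantNormal_of_map_commutatorElement_eq_one hd hdH ⟨h₀, hh₀H⟩ hh₀
      fun x _ => map_commutatorElement_eq_one hb₀ hfb₀ _ x
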